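/- Fix real numbers a < b and constants A, B, c, M > 0. Suppose that for all n ≥ 1: |K_n^{(l,m)}(x,y)| ≤ A n^{l+m}/(|x−y| + 1/n) for all x, y ∈ [a,b] and all l, m ∈ {0,1}; K_n(x,x) ≥ B n and |K_n^{(0,1)}(x,x)| ≤ M n K_n(x,x) for all x ∈ [a,b]; and v_n(t) ≥ c for all t ∈ [na, nb]. Then there is a constant C > 0, depending only on A, B, c, M, such that for all n ≥ 1 and all s, t ∈ [na, nb], |r̃''_n(s,t)| ≤ C/(|s−t| + 1). -/

import Mathlib

set_option autoImplicit false

open MeasureTheory Real Set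

/-- `Kder p n l m x y = ∑_{j=0}^n p_j^{(l)}(x) p_j^{(m)}(y)`. -/
noncomputable def Kder (p : ℕ → Polynomial ℝ) (n l m : ℕ) (x y : ℝ) : ℝ :=
  ∑ j ∈ Finset.range (n + 1),
    (Polynomial.derivative^[l] (p j)).eval x * (Polynomial.derivative^[m] (p j)).eval y

/-- `v_n(t)`. -/
noncomputable def vFun (p : ℕ → Polynomial ℝ) (n : ℕ) (t : ℝ) : ℝ :=
  Real.sqrt ((1 / (n : ℝ) ^ 2) * (Kder p n 1 1 (t / n) (t / n) / Kder p n 0 0 (t / n) (t / n))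
    - (1 / (n : ℝ) ^ 2) * (Kder p n 0 1 (t / n) (t / n) / Kder p n 0 0 (t / n) (t / n)) ^ 2)

/-- `r̃''_n(s,t)`. -/
noncomputable def rtil'' (p : ℕ → Polynomial ℝ) (n : ℕ) (s t : ℝ) : ℝ :=
  (1 / (vFun p n s * vFun p n t *
      Real.sqrt (Kder p n 0 0 (s / n) (s / n) * Kder p n 0 0 (t / n) (t / n)))) *
    (Kder p n 1 1 (s / n) (t / n) / (n : ℝ) ^ 2
      - Kder p n 0 1 (t / n) (t / n) * Kder p n 1 0 (s / n) (t / n)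
          / ((n : ℝ) ^ 2 * Kder p n 0 0 (t / n) (t / n))
      - Kder p n 0 1 (s / n) (s / n) * Kder p n 0 1 (s / n) (t / n)
          / ((n : ℝ) ^ 2 * Kder p n 0 0 (s / n) (s / n))
      + Kder p n 0 1 (t / n) (t / n) * Kder p n 0 1 (s / n) (s / n) * Kder p n 0 0 (s / n) (t / n)
          / ((n : ℝ) ^ 2 * Kder p n 0 0 (t / n) (t / n) * Kder p n 0 0 (s / n) (s / n)))

/-!
In the local variables `x = s/n`, `y = t/n` the kernel bound becomes
`|n^{-(l+m)} K_n^{(l,m)}(x,y)| ≤ A n / (|s-t| + 1)`, and the diagonal hypotheses bound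
`α = K_n^{(0,1)}(y,y) / (n K_n(y,y))` and `β = K_n^{(0,1)}(x,x) / (n K_n(x,x))` by `M`.
The bracket of `r̃''_n` is `k₁₁ - α k₁₀ - β k₀₁ + α β k₀₀` in these rescaled kernels
`k_{lm}`, hence at most `(1+M)² A n / (|s-t| + 1)`, while its prefactor is at least `c² B n`
because `v_n ≥ c` and `K_n(x,x) ≥ B n`. The factors `n` cancel.
-/

open Polynomial

lemma div_mem_Icc_of_mem_Icc_mul {a b n s : ℝ} (hn : 0 < n) (hs : s ∈ Icc (n * a) (n * b)) :
    s / n ∈ Icc a b :=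
  ⟨(le_div_iff₀ hn).2 (by linarith [hs.1]), (div_le_iff₀ hn).2 (by linarith [hs.2])⟩

lemma abs_div_sub_div_add_inv {n s t : ℝ} (hn : 0 < n) :
    |s / n - t / n| + 1 / n = (|s - t| + 1) / n := by
  rw [div_sub_div_same, abs_div, abs_of_pos hn, ← add_div]

lemma abs_sub_mul_sub_mul_add_mul_mul_le {w x y z α β M X : ℝ}
    (hw : |w| ≤ X) (hx : |x| ≤ X) (hy : |y| ≤ X) (hz : |z| ≤ X) (hα : |α| ≤ M) (hβ : |β| ≤ M) :
    |w - α * x - β * y + α * β * z| ≤ (1 + M) ^ 2 * X := by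
  have hM : 0 ≤ M := (abs_nonneg α).trans hα
  calc |w - α * x - β * y + α * β * z|
        ≤ |w| + |α| * |x| + |β| * |y| + |α| * |β| * |z| := by
          simp only [← abs_mul]
          linarith [abs_add_le (w - α * x - β * y) (α * β * z), abs_sub (w - α * x) (β * y),
            abs_sub w (α * x)]
    _ ≤ X + M * X + M * X + M * M * X := by gcongr
    _ = (1 + M) ^ 2 * X := by ring

lemma sq_mul_le_mul_mul_sqrt_mul {c u v k q r : ℝ} (hc : 0 ≤ c) (hu : c ≤ u) (hv : c ≤ v)
    (hk : 0 ≤ k) (hq : k ≤ q) (hr : k ≤ r) : c ^ 2 * k ≤ u * v * √(q * r) := by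
  have hkqr : k ≤ √(q * r) :=
    (Real.le_sqrt hk (by nlinarith)).2 (by nlinarith)
  calc c ^ 2 * k = (c * c) * k := by ring
    _ ≤ (u * v) * √(q * r) :=
      mul_le_mul (mul_le_mul hu hv hc (hc.trans hu)) hkqr hk
        (mul_nonneg (hc.trans hu) (hc.trans hv))

noncomputable def scaledKder (p : ℕ → ℝ[X]) (n l m : ℕ) (x y : ℝ) : ℝ :=
  Kder p n l m x y / (n : ℝ) ^ (l + m)

noncomputable def diagRatio (p : ℕ → ℝ[X]) (n : ℕ) (x : ℝ) : ℝ :=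
  Kder p n 0 1 x x / (n * Kder p n 0 0 x x)

lemma rtil''_eq (p : ℕ → ℝ[X]) (n : ℕ) (s t : ℝ) :
    rtil'' p n s t =
      (scaledKder p n 1 1 (s / n) (t / n)
        - diagRatio p n (t / n) * scaledKder p n 1 0 (s / n) (t / n)
        - diagRatio p n (s / n) * scaledKder p n 0 1 (s / n) (t / n)
        + diagRatio p n (t / n) * diagRatio p n (s / n) * scaledKder p n 0 0 (s / n) (t / n)) /
      (vFun p n s * vFun p n t *
        √(Kder p n 0 0 (s / n) (s / n) * Kder p n 0 0 (t / n) (t / n))) := by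
  unfold rtil'' scaledKder diagRatio
  ring

lemma abs_scaledKder_le {p : ℕ → ℝ[X]} {n l m : ℕ} {A s t : ℝ} (hn : 0 < n)
    (hK : |Kder p n l m (s / n) (t / n)| ≤ A * (n : ℝ) ^ (l + m) / (|s / n - t / n| + 1 / n)) :
    |scaledKder p n l m (s / n) (t / n)| ≤ A * n / (|s - t| + 1) := by
  have hn' : (0 : ℝ) < n := Nat.cast_pos.2 hn
  rw [abs_div_sub_div_add_inv hn', div_div_eq_mul_div] at hK
  rw [scaledKder, abs_div, abs_of_pos (pow_pos hn' _), div_le_iff₀ (pow_pos hn' _)]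
  calc |Kder p n l m (s / n) (t / n)| ≤ A * (n : ℝ) ^ (l + m) * n / (|s - t| + 1) := hK
    _ = A * n / (|s - t| + 1) * (n : ℝ) ^ (l + m) := by ring

lemma abs_diagRatio_le {p : ℕ → ℝ[X]} {n : ℕ} {M x : ℝ} (hn : 0 < n)
    (hpos : 0 < Kder p n 0 0 x x) (h : |Kder p n 0 1 x x| ≤ M * n * Kder p n 0 0 x x) :
    |diagRatio p n x| ≤ M := by
  have hn' : (0 : ℝ) < n := Nat.cast_pos.2 hn
  rw [diagRatio, abs_div, abs_of_pos (mul_pos hn' hpos), div_le_iff₀ (mul_pos hn' hpos)]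
  linarith

theorem rtil''_decay_general (a b : ℝ) (A B c M : ℝ)
    (hA : 0 < A) (hB : 0 < B) (hc : 0 < c) (hM : 0 < M)
    (p : ℕ → Polynomial ℝ)
    (hK : ∀ n : ℕ, 1 ≤ n → ∀ l ≤ 1, ∀ m ≤ 1, ∀ x ∈ Set.Icc a b, ∀ y ∈ Set.Icc a b,
      |Kder p n l m x y| ≤ A * (n : ℝ) ^ (l + m) / (|x - y| + 1 / n))
    (hKdiag : ∀ n : ℕ, 1 ≤ n → ∀ x ∈ Set.Icc a b, Kder p n 0 0 x x ≥ B * n)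
    (hK01diag : ∀ n : ℕ, 1 ≤ n → ∀ x ∈ Set.Icc a b,
      |Kder p n 0 1 x x| ≤ M * n * Kder p n 0 0 x x)
    (hv : ∀ n : ℕ, 1 ≤ n → ∀ t ∈ Set.Icc ((n : ℝ) * a) ((n : ℝ) * b), c ≤ vFun p n t) :
    ∃ C : ℝ, 0 < C ∧ ∀ n : ℕ, 1 ≤ n → ∀ s ∈ Set.Icc ((n : ℝ) * a) ((n : ℝ) * b),
      ∀ t ∈ Set.Icc ((n : ℝ) * a) ((n : ℝ) * b),
        |rtil'' p n s t| ≤ C / (|s - t| + 1) := by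
  refine ⟨A * (1 + M) ^ 2 / (c ^ 2 * B), by positivity, fun n hn s hs t ht => ?_⟩
  have hn' : (0 : ℝ) < n := Nat.cast_pos.2 hn
  have hx := div_mem_Icc_of_mem_Icc_mul hn' hs
  have hy := div_mem_Icc_of_mem_Icc_mul hn' ht
  have hKx := (by positivity : (0 : ℝ) < B * n).trans_le (hKdiag n hn _ hx)
  have hKy := (by positivity : (0 : ℝ) < B * n).trans_le (hKdiag n hn _ hy)
  have scaled : ∀ l ≤ 1, ∀ m ≤ 1, |scaledKder p n l m (s / n) (t / n)| ≤ A * n / (|s - t| + 1) :=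
    fun l hl m hm => abs_scaledKder_le hn (hK n hn l hl m hm _ hx _ hy)
  have hnum := abs_sub_mul_sub_mul_add_mul_mul_le (scaled 1 le_rfl 1 le_rfl)
    (scaled 1 le_rfl 0 zero_le_one) (scaled 0 zero_le_one 1 le_rfl)
    (scaled 0 zero_le_one 0 zero_le_one)
    (abs_diagRatio_le hn hKy (hK01diag n hn _ hy)) (abs_diagRatio_le hn hKx (hK01diag n hn _ hx))
  have hden := sq_mul_le_mul_mul_sqrt_mul hc.le (hv n hn s hs) (hv n hn t ht) (by positivity)
    (hKdiag n hn _ hx) (hKdiag n hn _ hy)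
  rw [rtil''_eq, abs_div, abs_of_pos ((by positivity : 0 < c ^ 2 * (B * n)).trans_le hden)]
  calc _ ≤ (1 + M) ^ 2 * (A * n / (|s - t| + 1)) / (c ^ 2 * (B * n)) :=
        div_le_div₀ (by positivity) hnum (by positivity) hden
    _ = A * (1 + M) ^ 2 / (c ^ 2 * B) / (|s - t| + 1) := by field_simp

theorem rtil''_decay (a b : ℝ) (hab : a < b) (A B c M : ℝ)
    (hA : 0 < A) (hB : 0 < B) (hc : 0 < c) (hM : 0 < M)
    (p : ℕ → Polynomial ℝ)
    (hK : ∀ n : ℕ, 1 ≤ n → ∀ l ≤ 1, ∀ m ≤ 1, ∀ x ∈ Set.Icc a b, ∀ y ∈ Set.Icc a b,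
      |Kder p n l m x y| ≤ A * (n : ℝ) ^ (l + m) / (|x - y| + 1 / n))
    (hKdiag : ∀ n : ℕ, 1 ≤ n → ∀ x ∈ Set.Icc a b, Kder p n 0 0 x x ≥ B * n)
    (hK01diag : ∀ n : ℕ, 1 ≤ n → ∀ x ∈ Set.Icc a b,
      |Kder p n 0 1 x x| ≤ M * n * Kder p n 0 0 x x)
    (hv : ∀ n : ℕ, 1 ≤ n → ∀ t ∈ Set.Icc ((n : ℝ) * a) ((n : ℝ) * b), c ≤ vFun p n t) :
    ∃ C : ℝ, 0 < C ∧ ∀ n : ℕ, 1 ≤ n → ∀ s ∈ Set.Icc ((n : ℝ) * a) ((n : ℝ) * b),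
      ∀ t ∈ Set.Icc ((n : ℝ) * a) ((n : ℝ) * b),
        |rtil'' p n s t| ≤ C / (|s - t| + 1) :=
  rtil''_decay_general a b A B c M hA hB hc hM p hK hKdiag hK01diag hv
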